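/- With the Harper-type parameters below, fix 0 < k < 1/2. There is an absolute constant C such that for every large X, every odd prime p, and every 1 ≤ i ≤ 𝓘, one has 𝓝_i(p, 2k−1)^{2(2−3k)/(1−2k)} · 𝓝_i(p, 2−2k)^2 ≤ 𝓝_i(p, 2k) · (1 + C·e^{−e²k α_i^{−3/4}}) + 𝓠_i(p, k)^{r_k}, where r_k = 3 + ⌈2(2−3k)/(1−2k)⌉. -/

import Mathlib

/-!
Write `y = e² k α_i^{-3/4}`, `ℓ = ⌈y⌉`, `P = 𝓟_i(p)` and `c = 2(2-3k)/(1-2k)`, so that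
`𝓝_i(p, a)` is the degree-`2ℓ` Taylor polynomial of `exp` at `aP` and the weights satisfy
`(2k-1)c + 2(2-2k) = 2k`.

If `|P| ≤ ℓ/16`, each of the three Taylor polynomials is `e^{aP}` up to a relative error
`e^{-y}`, so the left-hand side is at most `e^{2kP}(1 + O(e^{-y}))`, hence at most
`𝓝_i(p, 2k)(1 + O(e^{-y}))`.
If `|P| > ℓ/16`, every Taylor polynomial of degree `2ℓ` at a point of size `≤ 2|P|` is at most
`u = (e(|P| + ℓ)/ℓ)^{2ℓ}` in absolute value, while `𝓠_i(p, k) ≥ 4u ≥ 4`; so both sides are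
dominated by `𝓠_i(p, k)^{r_k}`.

It remains to see that `y` is large: for `X ≥ exp (exp 10^M)` every `α_i` with `1 ≤ i ≤ 𝓘` is at
most `20 · 10^{-M}`, because `α_{i+1} = 20 α_i` for `i ≥ 1`.
-/

open Filter Finset

/-- `χ_{8p}(n)`: the Kronecker symbol `(8p/n)`. Since `8p ≡ 0 (mod 4)`, Mathlib's Jacobi
symbol `J(8p | n)` agrees with the Kronecker symbol `(8p/n)` for all `n ≥ 1`. -/
def chi8p (p n : ℕ) : ℤ := jacobiSym (8 * p) n

/-- `α_0 = log 2 / log X` and `α_i = 20^{i-1}/(log log X)²` for `i ≥ 1`. -/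
noncomputable def alphaP (X : ℝ) : ℕ → ℝ
  | 0 => Real.log 2 / Real.log X
  | i + 1 => 20 ^ i / (Real.log (Real.log X)) ^ 2

/-- `𝓘 = 1 + max {i : α_i ≤ 10^{-M}}`. -/
noncomputable def bigI (M : ℕ) (X : ℝ) : ℕ :=
  1 + sSup {i : ℕ | alphaP X i ≤ ((10 : ℝ) ^ M)⁻¹}

/-- `E_y(x) = ∑_{j=0}^{2⌈y⌉} x^j/j!`. -/
noncomputable def Efun (y x : ℝ) : ℝ :=
  ∑ j ∈ Finset.range (2 * ⌈y⌉₊ + 1), x ^ j / (j.factorial : ℝ)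

/-- `𝓟_i(p) = ∑_{X^{α_{i-1}} < q ≤ X^{α_i}, q prime} χ_{8p}(q)/√q`. -/
noncomputable def Pfun (X : ℝ) (p i : ℕ) : ℝ :=
  ∑ q ∈ (Finset.range (⌊X ^ alphaP X i⌋₊ + 1)).filter
      (fun q : ℕ => q.Prime ∧ X ^ alphaP X (i - 1) < (q : ℝ)),
    (chi8p p q : ℝ) / Real.sqrt q

/-- The length parameter `⌈e² k α_i^{-3/4}⌉`. -/
noncomputable def lenP (k X : ℝ) (i : ℕ) : ℕ :=
  ⌈Real.exp 2 * k * alphaP X i ^ (-(3 : ℝ) / 4)⌉₊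

/-- `𝓝_i(p, a) = E_{e²k α_i^{-3/4}}(a 𝓟_i(p))`. -/
noncomputable def Nfun (k X : ℝ) (p i : ℕ) (a : ℝ) : ℝ :=
  Efun (Real.exp 2 * k * alphaP X i ^ (-(3 : ℝ) / 4)) (a * Pfun X p i)

/-- `𝓝(p, a) = ∏_{i=1}^{𝓘} 𝓝_i(p, a)`. -/
noncomputable def NNfun (k : ℝ) (M : ℕ) (X : ℝ) (p : ℕ) (a : ℝ) : ℝ :=
  ∏ i ∈ Finset.Icc 1 (bigI M X), Nfun k X p i a

/-- `𝓠_i(p, k) = (12 max(9, 36k²) 𝓟_i(p) / ⌈e²k α_i^{-3/4}⌉)^{2⌈e²k α_i^{-3/4}⌉}`. -/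
noncomputable def Qfun (k X : ℝ) (p i : ℕ) : ℝ :=
  (12 * max 9 (36 * k ^ 2) * Pfun X p i / (lenP k X i : ℝ)) ^ (2 * lenP k X i)

open Real

noncomputable def expPartialSum (n : ℕ) (x : ℝ) : ℝ :=
  ∑ j ∈ range n, x ^ j / j.factorial

lemma Efun_eq_expPartialSum (y x : ℝ) : Efun y x = expPartialSum (2 * ⌈y⌉₊ + 1) x := rfl

lemma abs_exp_sub_expPartialSum_le {n : ℕ} {x : ℝ} (hn : 0 < n) (hx : |x| ≤ n / 16) :
    |exp x - expPartialSum n x| ≤ exp (-(n / 2)) * exp x := by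
  have hrem : |exp x - expPartialSum n x| ≤ |x| ^ n / n.factorial * 2 := by
    have hxc : ‖(x : ℂ)‖ / n.succ ≤ 1 / 2 := by
      rw [Complex.norm_real, Real.norm_eq_abs, div_le_iff₀ (by positivity)]
      push_cast; linarith
    convert Complex.exp_bound' hxc using 1 <;> norm_cast
  have hratio : |x| / n ≤ 1 / (2 * exp 2) := by
    have he2 : exp 2 < 8 := by
      rw [show (2 : ℝ) = 1 + 1 by norm_num, exp_add]
      nlinarith [exp_one_lt_d9, exp_pos 1]
    rw [div_le_div_iff₀ (by positivity) (by positivity)]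
    nlinarith [mul_le_mul_of_nonneg_left he2.le (abs_nonneg x)]
  calc |exp x - expPartialSum n x| ≤ |x| ^ n / n.factorial * 2 := hrem
    _ = (|x| / n) ^ n * ((n : ℝ) ^ n / n.factorial) * 2 := by
        rw [div_pow]; field_simp
    _ ≤ (1 / (2 * exp 2)) ^ n * exp n * 2 := by
        gcongr ?_ * ?_ * 2
        · exact pow_le_pow_left₀ (by positivity) hratio n
        · exact Real.pow_div_factorial_le_exp _ n.cast_nonneg n
    _ = exp (-n) * (2 / 2 ^ n) := by
        rw [div_pow, one_pow, mul_pow, ← exp_nat_mul, exp_neg, show (n : ℝ) * 2 = n + n by ring,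
          exp_add]
        field_simp
    _ ≤ exp (-n) := mul_le_of_le_one_right (exp_nonneg _)
        ((div_le_one (by positivity)).2 (by simpa using pow_le_pow_right₀ one_le_two hn))
    _ = exp (-(n / 2)) * exp (-(n / 2)) := by rw [← exp_add]; ring_nf
    _ ≤ exp (-(n / 2)) * exp x := by
        gcongr; linarith [neg_abs_le x, n.cast_nonneg (α := ℝ)]

lemma one_add_rpow_add_two_le {c ε : ℝ} (hc : 0 ≤ c) (hε : 0 ≤ ε) (h : (c + 3) * ε ≤ 1 / 2) :
    (1 + ε) ^ (c + 2) ≤ (1 - ε) * (1 + 2 * (c + 3) * ε) := by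
  have hε' : (c + 2) * ε < 1 := by nlinarith
  calc (1 + ε) ^ (c + 2) ≤ exp ε ^ (c + 2) := by
        gcongr; linarith [add_one_le_exp ε]
    _ = exp ((c + 2) * ε) := by rw [← exp_mul, mul_comm]
    _ ≤ 1 / (1 - (c + 2) * ε) := exp_bound_div_one_sub_of_interval (by positivity) hε'
    _ ≤ (1 - ε) * (1 + 2 * (c + 3) * ε) := by
        rw [div_le_iff₀ (by linarith)]
        have hs : 0 ≤ (c + 3) * ε := by positivity
        nlinarith [mul_nonneg hs (by linarith : 0 ≤ 1 - 2 * ((c + 3) * ε)),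
          mul_nonneg (mul_nonneg hε (by positivity : 0 ≤ (c + 2) * ε))
            (by linarith : 0 ≤ 1 + 2 * ((c + 3) * ε))]

lemma mul_exp_neg_le_half {c y : ℝ} (h : c ≤ y) : c * exp (-y) ≤ 1 / 2 := by
  calc c * exp (-y) ≤ exp (y - 1) * exp (-y) := by
        gcongr; linarith [add_one_le_exp (y - 1)]
    _ = exp (-1) := by rw [← exp_add]; ring_nf
    _ ≤ 1 / 2 := exp_neg_one_lt_half.le

lemma pow_le_div_pow_mul_pow {t : ℝ} {N j : ℕ} (hN : (N : ℝ) ≤ t) (hj : j ≤ N) :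
    t ^ j ≤ (t / N) ^ N * (N : ℝ) ^ j := by
  rcases Nat.eq_zero_or_pos N with rfl | hN0
  · simp [Nat.le_zero.1 hj]
  have hN0' : (0 : ℝ) < N := by exact_mod_cast hN0
  calc t ^ j ≤ (t / N) ^ (N - j) * t ^ j :=
        le_mul_of_one_le_left (pow_nonneg (hN0'.le.trans hN) j)
          (one_le_pow₀ ((one_le_div hN0').2 hN))
    _ = (t / N) ^ N * (N : ℝ) ^ j := by
        rw [← Nat.sub_add_cancel hj, pow_add, Nat.add_sub_cancel, mul_assoc, div_pow t _ j]
        field_simp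

lemma abs_expPartialSum_succ_le {N : ℕ} {x t : ℝ} (hN : (N : ℝ) ≤ t) (hxt : |x| ≤ t) :
    |expPartialSum (N + 1) x| ≤ (exp 1 * t / N) ^ N := by
  calc |expPartialSum (N + 1) x| ≤ ∑ j ∈ range (N + 1), t ^ j / j.factorial := by
        refine (abs_sum_le_sum_abs _ _).trans (sum_le_sum fun j _ => ?_)
        rw [abs_div, abs_pow, Nat.abs_cast]
        gcongr
    _ ≤ ∑ j ∈ range (N + 1), (t / N) ^ N * ((N : ℝ) ^ j / j.factorial) := by
        refine sum_le_sum fun j hj => ?_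
        rw [← mul_div_assoc]
        gcongr
        exact pow_le_div_pow_mul_pow hN (Nat.lt_succ_iff.1 (mem_range.1 hj))
    _ ≤ (t / N) ^ N * exp N := by
        rw [← mul_sum]
        gcongr
        · exact pow_nonneg (div_nonneg (N.cast_nonneg.trans hN) N.cast_nonneg) N
        · exact sum_le_exp_of_nonneg N.cast_nonneg _
    _ = (exp 1 * t / N) ^ N := by rw [mul_div_assoc, mul_pow, exp_one_pow, mul_comm]

lemma rpow_mul_sq_add_two_mul_le {c u Q : ℝ} {r : ℕ} (hc : 0 ≤ c) (hr : c + 2 ≤ r)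
    (hu : 1 ≤ u) (hQ : 4 * u ≤ Q) : u ^ c * u ^ 2 + 2 * u ≤ Q ^ r := by
  calc u ^ c * u ^ 2 + 2 * u ≤ 3 * u ^ (c + 2) := by
        have : u ≤ u ^ (c + 2) := by
          simpa using rpow_le_rpow_of_exponent_le hu (by linarith : (1 : ℝ) ≤ c + 2)
        rw [rpow_add (by positivity), rpow_two] at this ⊢
        linarith
    _ ≤ (4 * u) ^ (c + 2) := by
        rw [mul_rpow (by norm_num) (by positivity)]
        gcongr
        calc (3 : ℝ) ≤ 4 ^ (1 : ℝ) := by norm_num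
          _ ≤ 4 ^ (c + 2) := rpow_le_rpow_of_exponent_le (by norm_num) (by linarith)
    _ ≤ Q ^ (c + 2) := by gcongr
    _ ≤ Q ^ r := by
        rw [← rpow_natCast]
        exact rpow_le_rpow_of_exponent_le (by linarith) hr

lemma four_mul_pow_le_div_pow {D P : ℝ} {ℓ : ℕ} (hD : 108 ≤ D) (hℓ : 1 ≤ ℓ)
    (hP : ℓ < 16 * |P|) :
    4 * (exp 1 * (2 * |P| + 2 * ℓ) / (2 * ℓ : ℕ)) ^ (2 * ℓ) ≤ (D * P / ℓ) ^ (2 * ℓ) := by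
  have hℓ' : (1 : ℝ) ≤ ℓ := by exact_mod_cast hℓ
  have h4 : (4 : ℝ) ≤ 2 ^ (2 * ℓ) := by
    calc (4 : ℝ) = 2 ^ 2 := by norm_num
      _ ≤ 2 ^ (2 * ℓ) := pow_le_pow_right₀ one_le_two (by omega)
  have key : exp 1 * (2 * |P| + 2 * ℓ) ≤ D * |P| := by
    nlinarith [exp_one_lt_d9, mul_le_mul_of_nonneg_left hP.le (exp_pos 1).le,
      mul_le_mul_of_nonneg_right hD (abs_nonneg P),
      mul_le_mul_of_nonneg_right exp_one_lt_d9.le (abs_nonneg P)]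
  calc 4 * (exp 1 * (2 * |P| + 2 * ℓ) / (2 * ℓ : ℕ)) ^ (2 * ℓ)
      ≤ 2 ^ (2 * ℓ) * (exp 1 * (2 * |P| + 2 * ℓ) / (2 * ℓ : ℕ)) ^ (2 * ℓ) := by gcongr
    _ = (2 * (exp 1 * (2 * |P| + 2 * ℓ) / (2 * ℓ : ℕ))) ^ (2 * ℓ) := by rw [mul_pow]
    _ ≤ (D * |P| / ℓ) ^ (2 * ℓ) := by
        gcongr
        push_cast
        rw [mul_div_assoc', div_le_div_iff₀ (by positivity) (by positivity)]
        nlinarith [mul_le_mul_of_nonneg_right key (by positivity : (0 : ℝ) ≤ ℓ)]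
    _ = (D * P / ℓ) ^ (2 * ℓ) := by
        rw [← (even_two_mul ℓ).pow_abs (D * P / ℓ), abs_div, abs_mul, Nat.abs_cast,
          abs_of_nonneg (by linarith : (0 : ℝ) ≤ D)]

section Weights

variable {a b w c : ℝ}

lemma expPartialSum_rpow_mul_sq_le_of_abs_le (ha : |a| ≤ 2) (hb : |b| ≤ 2) (hw : |w| ≤ 2)
    (hc : 0 ≤ c) (habw : a * c + 2 * b = w) {y P : ℝ} {ℓ : ℕ} (hy : c + 3 ≤ y) (hyℓ : y ≤ ℓ)
    (hP : |P| ≤ ℓ / 16) :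
    expPartialSum (2 * ℓ + 1) (a * P) ^ c * expPartialSum (2 * ℓ + 1) (b * P) ^ 2 ≤
      expPartialSum (2 * ℓ + 1) (w * P) * (1 + 2 * (c + 3) * exp (-y)) := by
  set S := expPartialSum (2 * ℓ + 1)
  set ε := exp (-y)
  have hε : (c + 3) * ε ≤ 1 / 2 := mul_exp_neg_le_half hy
  have happrox : ∀ s, |s| ≤ 2 → |exp (s * P) - S (s * P)| ≤ ε * exp (s * P) := by
    intro s hs
    refine (abs_exp_sub_expPartialSum_le (by omega) ?_).trans ?_
    · rw [abs_mul]; push_cast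
      nlinarith [abs_nonneg P, abs_nonneg s]
    · exact mul_le_mul_of_nonneg_right (exp_le_exp.2 (by push_cast; linarith)) (exp_nonneg _)
  have hupper : ∀ s, |s| ≤ 2 → S (s * P) ≤ (1 + ε) * exp (s * P) := fun s hs => by
    linarith [(abs_le.1 (happrox s hs)).1]
  have hlower : ∀ s, |s| ≤ 2 → (1 - ε) * exp (s * P) ≤ S (s * P) := fun s hs => by
    linarith [(abs_le.1 (happrox s hs)).2]
  have hε1 : ε ≤ 1 := by nlinarith [exp_nonneg (-y)]
  have hnonneg : ∀ s, |s| ≤ 2 → 0 ≤ S (s * P) := fun s hs =>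
    (mul_nonneg (by linarith) (exp_nonneg _)).trans (hlower s hs)
  calc S (a * P) ^ c * S (b * P) ^ 2
      ≤ ((1 + ε) * exp (a * P)) ^ c * ((1 + ε) * exp (b * P)) ^ 2 := by
        gcongr
        · exact hnonneg a ha
        · exact hupper a ha
        · exact hnonneg b hb
        · exact hupper b hb
    _ = (1 + ε) ^ (c + 2) * exp (w * P) := by
        rw [mul_rpow (by positivity) (exp_nonneg _), rpow_add (by positivity), ← exp_mul,
          ← habw, rpow_two, mul_pow, ← exp_nat_mul, add_mul, exp_add]
        push_cast; ring_nf
    _ ≤ (1 - ε) * (1 + 2 * (c + 3) * ε) * exp (w * P) := by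
        gcongr; exact one_add_rpow_add_two_le hc (exp_nonneg _) hε
    _ ≤ S (w * P) * (1 + 2 * (c + 3) * ε) := by
        rw [mul_right_comm]; gcongr; exact hlower w hw

lemma expPartialSum_rpow_mul_sq_add_le_of_lt_abs (ha : |a| ≤ 2) (hb : |b| ≤ 2)
    (hw : |w| ≤ 2) (hc : 0 ≤ c) {D P : ℝ} {ℓ r : ℕ} (hr : c + 2 ≤ r) (hD : 108 ≤ D) (hℓ : 1 ≤ ℓ)
    (hP : ℓ < 16 * |P|) :
    expPartialSum (2 * ℓ + 1) (a * P) ^ c * expPartialSum (2 * ℓ + 1) (b * P) ^ 2 +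
        2 * |expPartialSum (2 * ℓ + 1) (w * P)| ≤ ((D * P / ℓ) ^ (2 * ℓ)) ^ r := by
  set S := expPartialSum (2 * ℓ + 1)
  set u := (exp 1 * (2 * |P| + 2 * ℓ) / (2 * ℓ : ℕ)) ^ (2 * ℓ)
  have hℓ' : (1 : ℝ) ≤ ℓ := by exact_mod_cast hℓ
  have hbound : ∀ s, |s| ≤ 2 → |S (s * P)| ≤ u := fun s hs =>
    abs_expPartialSum_succ_le (by push_cast; linarith [abs_nonneg P])
      (by rw [abs_mul]; nlinarith [abs_nonneg P, abs_nonneg s])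
  have hu : 1 ≤ u := by
    refine one_le_pow₀ ?_
    push_cast
    rw [le_div_iff₀ (by positivity)]
    nlinarith [add_one_le_exp (1 : ℝ), abs_nonneg P]
  refine le_trans ?_ (rpow_mul_sq_add_two_mul_le hc hr hu (four_mul_pow_le_div_pow hD hℓ hP))
  gcongr ?_ * ?_ + 2 * ?_
  -- `S (a * P)` may be negative, where `Real.rpow` is `|S (a * P)| ^ c * cos (π c)`
  · calc S (a * P) ^ c ≤ |S (a * P)| ^ c := (le_abs_self _).trans (abs_rpow_le_abs_rpow _ _)
      _ ≤ u ^ c := by gcongr; exact hbound a ha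
  · rw [← sq_abs]; gcongr; exact hbound b hb
  · exact hbound w hw

lemma expPartialSum_rpow_mul_sq_le (ha : |a| ≤ 2) (hb : |b| ≤ 2) (hw : |w| ≤ 2) (hc : 0 ≤ c)
    (habw : a * c + 2 * b = w) {D y P : ℝ} {ℓ r : ℕ} (hr : c + 2 ≤ r) (hD : 108 ≤ D)
    (hy : c + 3 ≤ y) (hyℓ : y ≤ ℓ) :
    expPartialSum (2 * ℓ + 1) (a * P) ^ c * expPartialSum (2 * ℓ + 1) (b * P) ^ 2 ≤
      expPartialSum (2 * ℓ + 1) (w * P) * (1 + 2 * (c + 3) * exp (-y)) +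
        ((D * P / ℓ) ^ (2 * ℓ)) ^ r := by
  rcases le_or_gt |P| (ℓ / 16) with hP | hP
  · exact (expPartialSum_rpow_mul_sq_le_of_abs_le ha hb hw hc habw hy hyℓ hP).trans
      (le_add_of_nonneg_right (pow_nonneg ((even_two_mul ℓ).pow_nonneg _) r))
  · have hlarge := expPartialSum_rpow_mul_sq_add_le_of_lt_abs (P := P) ha hb hw hc hr hD
      (by exact_mod_cast (by linarith : (1 : ℝ) ≤ ℓ)) (by linarith)
    set S := expPartialSum (2 * ℓ + 1) (w * P)
    set K := 1 + 2 * (c + 3) * exp (-y)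
    have hK₀ : 0 ≤ K := by positivity
    have hK₂ : K ≤ 2 := by linarith [mul_exp_neg_le_half hy]
    nlinarith [mul_nonneg (by linarith [neg_abs_le S] : 0 ≤ S + |S|) hK₀,
      mul_nonneg (abs_nonneg S) (by linarith : 0 ≤ 2 - K)]

end Weights

lemma Nat.sSup_mem_of_ne_zero {s : Set ℕ} (h : sSup s ≠ 0) : sSup s ∈ s :=
  Nat.sSup_mem (Set.nonempty_iff_ne_empty.2 fun hs => h (hs ▸ csSup_empty))
    (not_not.1 fun hs => h (Nat.sSup_of_not_bddAbove hs))

lemma alphaP_mem_Ioc_of_le_bigI {M : ℕ} {X : ℝ} (hX : (10 : ℝ) ^ M ≤ log (log X)) {i : ℕ}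
    (hi₁ : 1 ≤ i) (hi : i ≤ bigI M X) : alphaP X i ∈ Set.Ioc 0 (20 / 10 ^ M) := by
  obtain ⟨m, rfl⟩ := Nat.exists_eq_add_of_le' hi₁
  set T := log (log X)
  have hT : 1 ≤ T := (one_le_pow₀ (by norm_num)).trans hX
  have hα : alphaP X (m + 1) = 20 ^ m / T ^ 2 := rfl
  refine ⟨by rw [hα]; positivity, ?_⟩
  rcases Nat.eq_zero_or_pos m with rfl | hm
  · calc alphaP X (0 + 1) = 1 / T ^ 2 := by rw [hα, pow_zero]
      _ ≤ 1 / 10 ^ M := by gcongr; nlinarith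
      _ ≤ 20 / 10 ^ M := by gcongr; norm_num
  · set J := sSup {i : ℕ | alphaP X i ≤ ((10 : ℝ) ^ M)⁻¹}
    have hmJ : m ≤ J := by rw [bigI] at hi; omega
    obtain ⟨j, hj⟩ : ∃ j, J = j + 1 := ⟨J - 1, by omega⟩
    have hJ : 20 ^ j / T ^ 2 ≤ ((10 : ℝ) ^ M)⁻¹ := by
      have hJmem : J ∈ {i : ℕ | alphaP X i ≤ ((10 : ℝ) ^ M)⁻¹} :=
        Nat.sSup_mem_of_ne_zero (by omega)
      rwa [hj] at hJmem
    calc alphaP X (m + 1) ≤ 20 ^ (j + 1) / T ^ 2 := by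
          rw [hα]; gcongr; norm_num; omega
      _ = 20 * (20 ^ j / T ^ 2) := by ring
      _ ≤ 20 / 10 ^ M := by rw [div_eq_mul_inv 20]; gcongr

lemma exists_forall_le_mul_rpow {a : ℝ} (ha : 0 < a) (L : ℝ) :
    ∃ M₀ : ℕ, ∀ M ≥ M₀, ∀ α ∈ Set.Ioc 0 (20 / 10 ^ M), L ≤ a * α ^ (-(3 : ℝ) / 4) := by
  have hlim : Tendsto (fun M : ℕ => a * ((10 : ℝ) ^ M / 20) ^ ((3 : ℝ) / 4)) atTop atTop :=
    ((tendsto_rpow_atTop (by norm_num)).comp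
      ((tendsto_pow_atTop_atTop_of_one_lt (by norm_num)).atTop_div_const (by norm_num))
      ).const_mul_atTop ha
  obtain ⟨M₀, hM₀⟩ := eventually_atTop.1 (hlim.eventually_ge_atTop L)
  refine ⟨M₀, fun M hM α ⟨hα₀, hα⟩ => (hM₀ M hM).trans ?_⟩
  rw [neg_div, rpow_neg hα₀.le, ← inv_rpow hα₀.le]
  gcongr
  rwa [le_inv_comm₀ (by positivity) hα₀, inv_div]

/-- For `0 < k < 1/2` there is an absolute constant `C` such that for large `X`, every odd
prime `p` and `1 ≤ i ≤ 𝓘`: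
`𝓝_i(p,2k−1)^{2(2−3k)/(1−2k)} 𝓝_i(p,2−2k)² ≤ 𝓝_i(p,2k)(1 + C e^{−e²kα_i^{−3/4}}) + 𝓠_i(p,k)^{r_k}`. -/
theorem N_bound_small_k (k : ℝ) (hk0 : 0 < k) (hk : k < 1 / 2) :
    ∃ C : ℝ, 0 < C ∧ ∃ M₀ : ℕ, ∀ M : ℕ, M₀ ≤ M → ∃ X₀ : ℝ, ∀ X : ℝ, X₀ ≤ X →
      ∀ p : ℕ, p.Prime → p ≠ 2 → ∀ i : ℕ, 1 ≤ i → i ≤ bigI M X →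
        Nfun k X p i (2 * k - 1) ^ (2 * (2 - 3 * k) / (1 - 2 * k)) *
            Nfun k X p i (2 - 2 * k) ^ (2 : ℕ) ≤
          Nfun k X p i (2 * k) *
              (1 + C * Real.exp (-(Real.exp 2 * k * alphaP X i ^ (-(3 : ℝ) / 4)))) +
            Qfun k X p i ^ (3 + ⌈2 * (2 - 3 * k) / (1 - 2 * k)⌉₊) := by
  set c := 2 * (2 - 3 * k) / (1 - 2 * k) with hc_def
  have hc : 0 ≤ c := div_nonneg (by linarith) (by linarith)
  have habw : (2 * k - 1) * c + 2 * (2 - 2 * k) = 2 * k := by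
    have h12 : 1 - 2 * k ≠ 0 := by linarith
    rw [hc_def]; field_simp; ring
  refine ⟨2 * (c + 3), by positivity, ?_⟩
  obtain ⟨M₀, hM₀⟩ := exists_forall_le_mul_rpow (by positivity : 0 < exp 2 * k) (c + 3)
  refine ⟨M₀, fun M hM => ⟨exp (exp (10 ^ M)), fun X hX p _ _ i hi₁ hi => ?_⟩⟩
  have hlogX : exp (10 ^ M) ≤ log X := (le_log_iff_exp_le ((exp_pos _).trans_le hX)).2 hX
  have hloglogX : (10 : ℝ) ^ M ≤ log (log X) :=
    (le_log_iff_exp_le ((exp_pos _).trans_le hlogX)).2 hlogX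
  simp only [Nfun, Qfun, lenP, Efun_eq_expPartialSum]
  exact expPartialSum_rpow_mul_sq_le (abs_le.2 ⟨by linarith, by linarith⟩)
    (abs_le.2 ⟨by linarith, by linarith⟩) (abs_le.2 ⟨by linarith, by linarith⟩) hc habw
    (by push_cast; linarith [Nat.le_ceil c]) (by linarith [le_max_left 9 (36 * k ^ 2)])
    (hM₀ M hM _ (alphaP_mem_Ioc_of_le_bigI hloglogX hi₁ hi)) (Nat.le_ceil _)
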